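/- arXiv:1410.1948 — 7 statements merged into one kernel-verified Lean document; each statement's English description precedes it below -/
import Mathlib

section
/- Let k be a commutative ring, R a k-algebra with a topology, and X an affine k-scheme. Then the affine topology and the fine topology on X(R) coincide. -/
open AlgebraicGeometry CategoryTheory CategoryTheory.Limits Opposite TopologicalSpace

universe u

noncomputable section

/-- The affine topology on the set of `k`-algebra homomorphisms `A →ₐ[k] R`:
the coarsest topology making all evaluation maps `f ↦ f a` continuous. -/
def affineTopology (k A R : Type*) [CommRing k] [CommRing A] [CommRing R]
    [Algebra k A] [Algebra k R] [TopologicalSpace R] :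
    TopologicalSpace (A →ₐ[k] R) :=
  TopologicalSpace.induced (fun f (a : A) => f a) Pi.topologicalSpace

namespace SchemePoints

variable (k R : Type u) [CommRing k] [CommRing R] [Algebra k R]

/-- `Spec R` as a scheme over `Spec k`. -/
def specOver : Over (Spec (CommRingCat.of k)) :=
  Over.mk (Spec.map (CommRingCat.ofHom (algebraMap k R)))

/-- The set `X(R)` of `R`-rational points of a `k`-scheme `X`, i.e. morphisms
`Spec R ⟶ X` over `Spec k`. -/
def pts (X : Over (Spec (CommRingCat.of k))) : Type u :=
  specOver k R ⟶ X

/-- Evaluation of a global section of `X` at an `R`-rational point. -/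
def ev [TopologicalSpace R] (X : Over (Spec (CommRingCat.of k))) (g : pts k R X)
    (a : Γ(X.left, ⊤)) : R :=
  (Scheme.ΓSpecIso (CommRingCat.of R)).hom (Scheme.Hom.appTop ((Over.forget _).map g) a)

/-- The affine topology on `X(R)`. -/
def affineTop [TopologicalSpace R] (X : Over (Spec (CommRingCat.of k))) :
    TopologicalSpace (pts k R X) :=
  TopologicalSpace.induced (fun g (a : Γ(X.left, ⊤)) => ev k R X g a) Pi.topologicalSpace

/-- The fine topology on `X(R)`: the finest topology such that for every morphism
`U ⟶ X` from an affine `k`-scheme `U`, the induced map `U(R) → X(R)` is continuous,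
where `U(R)` carries the affine topology. -/
def fineTop [TopologicalSpace R] (X : Over (Spec (CommRingCat.of k))) :
    TopologicalSpace (pts k R X) :=
  ⨆ (U : Over (Spec (CommRingCat.of k))) (_ : IsAffine U.left) (φ : U ⟶ X),
    (affineTop k R U).coinduced (fun g => g ≫ φ)

end SchemePoints

open SchemePoints

/-!
For an affine `X` the identity `X ⟶ X` is one of the test maps defining the fine topology, so
the fine topology is coarser than the affine one. Conversely, the affine topology makes every
`φ_R : U(R) → X(R)` continuous, since evaluating `g ≫ φ` at a global section `a` of `X` is
evaluating `g` at its pullback `φ^* a`.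
-/

namespace SchemePoints

open scoped Topology

variable {k : Type u} (R : Type u) [CommRing k] [CommRing R] [Algebra k R] [TopologicalSpace R]

lemma ev_comp {U X : Over (Spec (CommRingCat.of k))} (φ : U ⟶ X) (g : pts k R U)
    (a : Γ(X.left, ⊤)) :
    ev k R X (g ≫ φ) a = ev k R U g (Scheme.Hom.appTop ((Over.forget _).map φ) a) :=
  rfl

lemma continuous_ev_affineTop (X : Over (Spec (CommRingCat.of k))) (a : Γ(X.left, ⊤)) :
    Continuous[affineTop k R X, _] fun g : pts k R X => ev k R X g a := by
  let := affineTop k R X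
  exact (continuous_apply a).comp
    (continuous_induced_dom (f := fun g (a : Γ(X.left, ⊤)) => ev k R X g a))

lemma continuous_comp_affineTop {U X : Over (Spec (CommRingCat.of k))} (φ : U ⟶ X) :
    Continuous[affineTop k R U, affineTop k R X] (fun g : pts k R U => g ≫ φ) := by
  let := affineTop k R U
  refine continuous_induced_rng.2 (continuous_pi fun a => ?_)
  exact (continuous_ev_affineTop R U _).congr fun g => (ev_comp R φ g a).symm

lemma fineTop_le_affineTop (X : Over (Spec (CommRingCat.of k))) :
    fineTop k R X ≤ affineTop k R X :=
  iSup_le fun _ => iSup_le fun _ => iSup_le fun φ =>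
    continuous_iff_coinduced_le.1 (continuous_comp_affineTop R φ)

lemma affineTop_le_fineTop (X : Over (Spec (CommRingCat.of k))) (hX : IsAffine X.left) :
    affineTop k R X ≤ fineTop k R X := by
  refine le_iSup₂_of_le X hX (le_iSup_of_le (𝟙 X) ?_)
  simp only [Category.comp_id]
  exact (coinduced_id (t := affineTop k R X)).ge

end SchemePoints

/-- for an affine `k`-scheme `X` and a `k`-algebra `R` with a topology, the
affine topology and the fine topology on `X(R)` coincide. -/
theorem statement_2 (k R : Type u) [CommRing k] [CommRing R] [Algebra k R] [TopologicalSpace R]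
    (X : Over (Spec (CommRingCat.of k))) (hX : IsAffine X.left) :
    affineTop k R X = fineTop k R X :=
  le_antisymm (affineTop_le_fineTop R X hX) (fineTop_le_affineTop R X)
end
end

section
/- Let k be a commutative ring, X a k-scheme, and f : R → S a continuous k-algebra homomorphism between k-algebras with topologies. Then the induced map f_X : X(R) → X(S), obtained by composing morphisms Spec R → X with Spec S → Spec R, is continuous when both sides carry the fine topology. -/
open AlgebraicGeometry CategoryTheory CategoryTheory.Limits Opposite TopologicalSpace

universe u

noncomputable section

namespace SchemePoints

variable {k R S : Type u} [CommRing k] [CommRing R] [CommRing S] [Algebra k R] [Algebra k S]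

/-- The morphism `Spec S ⟶ Spec R` over `Spec k` induced by a `k`-algebra homomorphism
`f : R → S`. -/
def specOverMap (f : R →ₐ[k] S) : specOver k S ⟶ specOver k R :=
  Over.homMk (Spec.map (CommRingCat.ofHom f.toRingHom)) (by
    dsimp [specOver]
    rw [← Spec.map_comp]
    congr 1
    exact congrArg CommRingCat.ofHom f.comp_algebraMap)

/-- The induced map `f_X : X(R) → X(S)` obtained by composing a point `Spec R ⟶ X` with
`Spec S ⟶ Spec R`. -/
def ptsBaseChange (f : R →ₐ[k] S) (X : Over (Spec (CommRingCat.of k))) (g : pts k R X) :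
    pts k S X :=
  specOverMap f ≫ g

end SchemePoints

/-!
Evaluating a point at a global section commutes with `f`, so `f_X` is continuous for the affine
topologies. For the fine topology it suffices to check continuity on each `U(R)` with `U` affine,
and there `f_X ∘ (· ≫ φ) = (· ≫ φ) ∘ f_U` is continuous by the affine case.
-/

namespace SchemePoints

variable {k R S : Type u} [CommRing k] [CommRing R] [CommRing S] [Algebra k R] [Algebra k S]

theorem ptsBaseChange_comp {U X : Over (Spec (CommRingCat.of k))} (f : R →ₐ[k] S)
    (φ : U ⟶ X) (g : pts k R U) :
    ptsBaseChange f X (g ≫ φ) = ptsBaseChange f U g ≫ φ :=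
  (Category.assoc _ _ _).symm

variable [TopologicalSpace R] [TopologicalSpace S]

theorem ev_ptsBaseChange (X : Over (Spec (CommRingCat.of k))) (f : R →ₐ[k] S) (g : pts k R X)
    (a : Γ(X.left, ⊤)) : ev k S X (ptsBaseChange f X g) a = f (ev k R X g a) :=
  congrArg (fun φ => φ (Scheme.Hom.appTop g.left a))
    (Scheme.ΓSpecIso_naturality (CommRingCat.ofHom f.toRingHom))

theorem continuous_ptsBaseChange_affineTop (X : Over (Spec (CommRingCat.of k)))
    {f : R →ₐ[k] S} (hf : Continuous f) :
    @Continuous (pts k R X) (pts k S X) (affineTop k R X) (affineTop k S X)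
      (ptsBaseChange f X) := by
  let := affineTop k R X
  refine continuous_induced_rng.2 (continuous_pi fun a => ?_)
  have hev : Continuous fun (g : pts k R X) (a : Γ(X.left, ⊤)) => ev k R X g a :=
    continuous_induced_dom
  exact (hf.comp ((continuous_apply a).comp hev)).congr fun g => (ev_ptsBaseChange X f g a).symm

theorem continuous_comp_fineTop {U X : Over (Spec (CommRingCat.of k))} (hU : IsAffine U.left)
    (φ : U ⟶ X) :
    @Continuous (pts k R U) (pts k R X) (affineTop k R U) (fineTop k R X) (· ≫ φ) :=
  continuous_iSup_rng (i := U) <| continuous_iSup_rng (i := hU) <|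
    continuous_iSup_rng (i := φ) continuous_coinduced_rng

end SchemePoints

open SchemePoints

/-- for a `k`-scheme `X` and a continuous `k`-algebra homomorphism `f : R → S`
between `k`-algebras with topologies, the induced map `f_X : X(R) → X(S)` is continuous for
the fine topologies. -/
theorem statement_4 (k R S : Type u) [CommRing k] [CommRing R] [CommRing S]
    [Algebra k R] [Algebra k S] [TopologicalSpace R] [TopologicalSpace S]
    (X : Over (Spec (CommRingCat.of k))) (f : R →ₐ[k] S) (hf : Continuous f) :
    @Continuous (pts k R X) (pts k S X) (fineTop k R X) (fineTop k S X)
      (ptsBaseChange f X) := by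
  refine continuous_iSup_dom.2 fun U => continuous_iSup_dom.2 fun hU =>
    continuous_iSup_dom.2 fun φ => continuous_coinduced_dom.2 ?_
  have hcomm : ptsBaseChange f X ∘ (· ≫ φ) = (· ≫ φ) ∘ ptsBaseChange f U :=
    funext (ptsBaseChange_comp f φ)
  rw [hcomm]
  exact @Continuous.comp _ _ _ (affineTop k R U) (affineTop k S U) (fineTop k S X) _ _
    (continuous_comp_fineTop hU φ) (continuous_ptsBaseChange_affineTop U hf)
end
end

section
/- Let k be a commutative ring and R a k-algebra that is a topological ring whose topology is Hausdorff. Then every closed immersion φ : Y → X of k-schemes induces a closed topological embedding φ_R : Y(R) → X(R) (a homeomorphism onto a closed subset) with respect to the fine topologies. -/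
open AlgebraicGeometry CategoryTheory CategoryTheory.Limits Opposite TopologicalSpace

universe u

noncomputable section

open SchemePoints Topology

/-! For a closed immersion `p : V ⟶ U` of affine schemes, `Γ(U) → Γ(V)` is surjective, so
the affine topology of `V(R)` is induced from `U(R)`, and the image of `V(R)` is the common
zero set of the evaluations at the kernel, which is closed because points of `R` are closed.
For an arbitrary closed immersion `φ : Y ⟶ X`, closedness in the fine topology of `X(R)` is
tested along affine `α : U ⟶ X`: the preimage under `α` of the image of a closed `C ⊆ Y(R)` is
the image of a closed subset of `(U ×_X Y)(R)` under the closed immersion `U ×_X Y ⟶ U` of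
affine schemes. -/

theorem CategoryTheory.IsPullback.preimage_image_comp {C : Type*} [Category C]
    {P U Y X T : C} {fst : P ⟶ U} {snd : P ⟶ Y} {α : U ⟶ X} {φ : Y ⟶ X}
    (h : IsPullback fst snd α φ) (S : Set (T ⟶ Y)) :
    (· ≫ α) ⁻¹' ((· ≫ φ) '' S) = (· ≫ fst) '' ((· ≫ snd) ⁻¹' S) := by
  ext f
  constructor
  · rintro ⟨g, hg, hgf⟩
    exact ⟨h.lift f g hgf.symm, by simpa using hg, by simp⟩
  · rintro ⟨p, hp, rfl⟩
    exact ⟨p ≫ snd, hp, by simp [h.w]⟩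

theorem Pi.isInducing_precomp_of_surjective {ι ι' X : Type*} [TopologicalSpace X]
    {π : ι' → ι} (hπ : Function.Surjective π) :
    IsInducing (· ∘ π : (ι → X) → (ι' → X)) :=
  ⟨by rw [Pi.induced_precomp, hπ.iInf_comp (fun i => induced (Function.eval i) _)]; rfl⟩

theorem AlgebraicGeometry.Scheme.exists_comp_eq_of_ker_le {T V U : Scheme.{u}}
    [IsAffine V] [IsAffine U] (p : V ⟶ U) (hp : Function.Surjective p.appTop)
    (f : T ⟶ U) (hf : RingHom.ker p.appTop.hom ≤ RingHom.ker f.appTop.hom) :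
    ∃ h : T ⟶ V, h ≫ p = f := by
  let χ := CommRingCat.ofHom (p.appTop.hom.liftOfSurjective hp ⟨f.appTop.hom, hf⟩)
  have hχ : p.appTop ≫ χ = f.appTop := by
    ext a
    exact RingHom.liftOfSurjective_comp_apply _ hp ⟨f.appTop.hom, hf⟩ a
  refine ⟨T.toSpecΓ ≫ Spec.map χ ≫ V.isoSpec.inv, ?_⟩
  rw [Category.assoc, Category.assoc, ← Scheme.isoSpec_inv_naturality, ← Spec.map_comp_assoc,
    hχ, ← Scheme.toSpecΓ_naturality_assoc, Scheme.toSpecΓ_isoSpec_inv, Category.comp_id]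

namespace SchemePoints

variable {k R : Type u} [CommRing k] [CommRing R] [Algebra k R]

theorem comp_injective_of_mono {X Y : Over (Spec (CommRingCat.of k))} (φ : Y ⟶ X)
    [Mono φ.left] : Function.Injective (fun g : pts k R Y => g ≫ φ) :=
  have := Over.mono_of_mono_left φ
  fun _ _ h => (cancel_mono φ).1 h

variable [TopologicalSpace R]

def evalMap (X : Over (Spec (CommRingCat.of k))) (g : pts k R X) : Γ(X.left, ⊤) → R :=
  ev k R X g

theorem isInducing_evalMap (X : Over (Spec (CommRingCat.of k))) :
    @IsInducing _ _ (affineTop k R X) _ (evalMap X) :=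
  IsInducing.induced _

theorem ev_eq_zero_iff {X : Over (Spec (CommRingCat.of k))} (g : pts k R X)
    (a : Γ(X.left, ⊤)) : ev k R X g a = 0 ↔ g.left.appTop a = 0 :=
  map_eq_zero_iff _ (Scheme.ΓSpecIso (CommRingCat.of R)).commRingCatIsoToRingEquiv.injective

theorem isClosed_setOf_ev_eq_zero [T1Space R] {X : Over (Spec (CommRingCat.of k))}
    (S : Set Γ(X.left, ⊤)) :
    IsClosed[affineTop k R X] {g | ∀ a ∈ S, ev k R X g a = 0} := by
  let := affineTop k R X
  simp only [Set.ofPred_forall]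
  exact isClosed_biInter fun a _ =>
    isClosed_singleton.preimage ((continuous_apply a).comp (isInducing_evalMap X).continuous)

theorem range_comp_of_surjective_appTop {V U : Over (Spec (CommRingCat.of k))}
    [IsAffine V.left] [IsAffine U.left] (p : V ⟶ U) (hp : Function.Surjective p.left.appTop) :
    Set.range (fun g : pts k R V => g ≫ p) = {f | ∀ a ∈ RingHom.ker p.left.appTop.hom,
      ev k R U f a = 0} := by
  ext f
  simp only [Set.mem_range, RingHom.mem_ker]
  constructor
  · rintro ⟨g, rfl⟩ a ha
    show ev k R V g (p.left.appTop a) = 0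
    rw [ha]
    exact (ev_eq_zero_iff g 0).2 (map_zero _)
  · intro hf
    obtain ⟨h, hh⟩ := Scheme.exists_comp_eq_of_ker_le p.left hp f.left
      fun a ha => (ev_eq_zero_iff f a).1 (hf a ha)
    refine ⟨Over.homMk h ?_, Over.OverMorphism.ext hh⟩
    rw [← Over.w p, ← Category.assoc, hh]
    exact Over.w f

theorem isInducing_comp_of_surjective_appTop {V U : Over (Spec (CommRingCat.of k))}
    (p : V ⟶ U) (hp : Function.Surjective p.left.appTop) :
    @IsInducing _ _ (affineTop k R V) (affineTop k R U) (fun g => g ≫ p) := by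
  let := affineTop k R V
  let := affineTop k R U
  have hcomm :
      evalMap U ∘ (fun g : pts k R V => g ≫ p) = (· ∘ p.left.appTop) ∘ evalMap V := rfl
  exact (isInducing_evalMap U).of_comp_iff.1 <|
    hcomm ▸ (Pi.isInducing_precomp_of_surjective hp).comp (isInducing_evalMap V)

theorem isClosedEmbedding_comp_affineTop [T1Space R] {V U : Over (Spec (CommRingCat.of k))}
    [IsAffine U.left] (p : V ⟶ U) [IsClosedImmersion p.left] :
    @IsClosedEmbedding _ _ (affineTop k R V) (affineTop k R U) (fun g => g ≫ p) := by
  have hp := (IsClosedImmersion.isAffine_surjective_of_isAffine p.left).2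
  have := isAffine_of_isAffineHom p.left
  let := affineTop k R V
  let := affineTop k R U
  refine ⟨⟨isInducing_comp_of_surjective_appTop p hp, comp_injective_of_mono p⟩, ?_⟩
  exact (congrArg (fun s => IsClosed[affineTop k R U] s)
    (range_comp_of_surjective_appTop p hp)).mpr (isClosed_setOf_ev_eq_zero _)

theorem isClosed_fineTop_iff {X : Over (Spec (CommRingCat.of k))} {S : Set (pts k R X)} :
    IsClosed[fineTop k R X] S ↔ ∀ (U : Over (Spec (CommRingCat.of k))), IsAffine U.left →
      ∀ α : U ⟶ X, IsClosed[affineTop k R U] ((· ≫ α) ⁻¹' S) := by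
  unfold fineTop
  simp only [isClosed_iSup_iff]
  exact forall_congr' fun U => forall_congr' fun _ => forall_congr' fun α => isClosed_coinduced

theorem continuous_comp_affineTop_fineTop {U X : Over (Spec (CommRingCat.of k))}
    (hU : IsAffine U.left) (α : U ⟶ X) :
    Continuous[affineTop k R U, fineTop k R X] (fun g => g ≫ α) :=
  continuous_iff_coinduced_le.2 <| le_iSup_of_le U <| le_iSup_of_le hU <|
    le_iSup (fun α => (affineTop k R U).coinduced (fun g => g ≫ α)) α

theorem continuous_comp_fineTop_s9 {Y X : Over (Spec (CommRingCat.of k))} (φ : Y ⟶ X) :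
    Continuous[fineTop k R Y, fineTop k R X] (fun g => g ≫ φ) := by
  refine continuous_iSup_dom.2 fun U => continuous_iSup_dom.2 fun hU =>
    continuous_iSup_dom.2 fun α => continuous_coinduced_dom.2 ?_
  let := affineTop k R U
  let := fineTop k R X
  exact (continuous_comp_affineTop_fineTop hU (α ≫ φ)).congr fun g =>
    (Category.assoc _ _ _).symm

theorem isClosedMap_comp_fineTop [T1Space R] {Y X : Over (Spec (CommRingCat.of k))} (φ : Y ⟶ X)
    [IsClosedImmersion φ.left] :
    @IsClosedMap _ _ (fineTop k R Y) (fineTop k R X) (fun g => g ≫ φ) := by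
  intro C hC
  refine isClosed_fineTop_iff.2 fun U hU α => ?_
  have hpb := IsPullback.of_hasPullback α φ
  have : IsClosedImmersion (pullback.fst α φ).left :=
    MorphismProperty.of_isPullback (hpb.map (Over.forget _)).flip ‹_›
  have hW := isAffine_of_isAffineHom (pullback.fst α φ).left
  let := fineTop k R Y
  let := affineTop k R U
  let := affineTop k R (pullback α φ)
  have hclosed := (isClosedEmbedding_comp_affineTop (R := R) (pullback.fst α φ)).isClosedMap _
    (hC.preimage (continuous_comp_affineTop_fineTop hW (pullback.snd α φ)))
  exact (congrArg (fun s => IsClosed[affineTop k R U] s) (hpb.preimage_image_comp C)).mpr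
    hclosed

end SchemePoints

theorem statement_9_general (k R : Type u) [CommRing k] [CommRing R] [Algebra k R]
    [TopologicalSpace R] [T2Space R]
    (X Y : Over (Spec (CommRingCat.of k))) (φ : Y ⟶ X) (hφ : IsClosedImmersion φ.left) :
    @IsClosedEmbedding (pts k R Y) (pts k R X) (fineTop k R Y) (fineTop k R X)
      (fun g => g ≫ φ) :=
  let := fineTop k R Y
  let := fineTop k R X
  .of_continuous_injective_isClosedMap (continuous_comp_fineTop_s9 φ) (comp_injective_of_mono φ)
    (isClosedMap_comp_fineTop φ)

/-- if `R` is a `k`-algebra which is a Hausdorff topological ring, then every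
closed immersion `φ : Y → X` of `k`-schemes induces a closed topological embedding
`φ_R : Y(R) → X(R)` with respect to the fine topologies. -/
theorem statement_9 (k R : Type u) [CommRing k] [CommRing R] [Algebra k R]
    [TopologicalSpace R] [IsTopologicalRing R] [T2Space R]
    (X Y : Over (Spec (CommRingCat.of k))) (φ : Y ⟶ X) (hφ : IsClosedImmersion φ.left) :
    @IsClosedEmbedding (pts k R Y) (pts k R X) (fineTop k R Y) (fineTop k R X)
      (fun g => g ≫ φ) :=
  statement_9_general k R X Y φ hφ
end
end

section
/- Let k be a commutative ring and R a k-algebra with a topology. Suppose that for all affine k-schemes of finite type: (F1) the canonical bijection (X ×_Z Y)(R) → X(R) ×_{Z(R)} Y(R) is a homeomorphism, (F2) the canonical bijection 𝔸¹_k(R) → R is a homeomorphism, and (F3) every closed immersion Y → X induces a closed topological embedding Y(R) → X(R), all with respect to the affine topology. Then R is a topological ring and its topology is Hausdorff. -/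
open AlgebraicGeometry CategoryTheory CategoryTheory.Limits Opposite TopologicalSpace

universe u

noncomputable section

namespace SchemePoints

variable {k : Type u} [CommRing k] (R : Type u) [CommRing R] [Algebra k R] [TopologicalSpace R]
variable {X Y Z : Over (Spec (CommRingCat.of k))}

/-- The fibered product `X ×_Z Y` of `k`-schemes, as a `k`-scheme. -/
def fiberProdOver (φ : X ⟶ Z) (ψ : Y ⟶ Z) : Over (Spec (CommRingCat.of k)) :=
  Over.mk (pullback.fst φ.left ψ.left ≫ X.hom)

/-- The first projection `X ×_Z Y ⟶ X` over `Spec k`. -/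
def fiberFst (φ : X ⟶ Z) (ψ : Y ⟶ Z) : fiberProdOver φ ψ ⟶ X :=
  Over.homMk (pullback.fst φ.left ψ.left) rfl

/-- The second projection `X ×_Z Y ⟶ Y` over `Spec k`. -/
def fiberSnd (φ : X ⟶ Z) (ψ : Y ⟶ Z) : fiberProdOver φ ψ ⟶ Y :=
  Over.homMk (pullback.snd φ.left ψ.left) (by
    dsimp [fiberProdOver]
    rw [← Over.w ψ, ← Category.assoc, ← pullback.condition, Category.assoc, Over.w φ])

/-- The canonical map `(X ×_Z Y)(R) → X(R) ×_{Z(R)} Y(R)`. -/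
def fiberCompare (φ : X ⟶ Z) (ψ : Y ⟶ Z) (g : pts k R (fiberProdOver φ ψ)) :
    {p : pts k R X × pts k R Y // p.1 ≫ φ = p.2 ≫ ψ} :=
  ⟨(g ≫ fiberFst φ ψ, g ≫ fiberSnd φ ψ), by
    rw [Category.assoc g, Category.assoc g]
    congr 1
    apply Over.OverMorphism.ext
    exact pullback.condition⟩

/-- The subspace topology of the product topology on the fibered product of point sets
`X(R) ×_{Z(R)} Y(R)`, where `X(R)` and `Y(R)` carry the given topologies. -/
def fiberPtsTop {α β : Type*} (tα : TopologicalSpace α) (tβ : TopologicalSpace β)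
    (p : α × β → Prop) : TopologicalSpace {x : α × β // p x} :=
  TopologicalSpace.induced Subtype.val (@instTopologicalSpaceProd α β tα tβ)

end SchemePoints

/-! Let `𝔸¹ = Spec k[X]`. By (F2) evaluation at the coordinate has a continuous section
`R → 𝔸¹(R)`, and by (F1) over the point `Spec k`, `(𝔸¹ ×ₖ 𝔸¹)(R) ≃ₜ 𝔸¹(R) × 𝔸¹(R)`. This gives a
continuous map `R × R → (𝔸¹ ×ₖ 𝔸¹)(R)` along which the global sections `x₁ + x₂` and `x₁ x₂` evaluate
to `a + b` and `a b`; evaluation at a global section is continuous by the definition of the affine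
topology. The diagonal `𝔸¹ → 𝔸¹ ×ₖ 𝔸¹` is a closed immersion, so (F3) makes the diagonal of `𝔸¹(R)`
closed, and `R` injects continuously into the Hausdorff space `𝔸¹(R)`. -/

attribute [local instance] SchemePoints.affineTop affineTopology

open scoped Polynomial

namespace SchemePoints

variable {k : Type u} [CommRing k] {R : Type u} [CommRing R] [Algebra k R]
variable {X Y Z : Over (Spec (CommRingCat.of k))}
variable {A : Type u} [CommRing A] [Algebra k A]

variable (R) in
def ptsMap (φ : X ⟶ Y) (g : pts k R X) : pts k R Y :=
  g ≫ φ

lemma ptsMap_ptsMap (φ : X ⟶ Y) (ψ : Y ⟶ Z) (g : pts k R X) :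
    ptsMap R ψ (ptsMap R φ g) = ptsMap R (φ ≫ ψ) g :=
  Category.assoc g φ ψ

lemma ptsMap_id (g : pts k R X) : ptsMap R (𝟙 X) g = g :=
  Category.comp_id g

def evRingHom (g : pts k R X) : Γ(X.left, ⊤) →+* R :=
  (Scheme.Hom.appTop g.left ≫ (Scheme.ΓSpecIso (CommRingCat.of R)).hom).hom

instance : IsAffine (specOver k A).left :=
  inferInstanceAs (IsAffine (Spec _))

instance : IsSeparated (specOver k A).hom :=
  inferInstanceAs (IsSeparated (Spec.map _))

instance [Algebra.FiniteType k A] : LocallyOfFiniteType (specOver k A).hom :=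
  HasRingHomProperty.Spec_iff.mpr (RingHom.finiteType_algebraMap.mpr ‹_›)

def ptOfAlgHom (f : A →ₐ[k] R) : pts k R (specOver k A) :=
  Over.homMk (Spec.map (CommRingCat.ofHom f.toRingHom)) (by
    change Spec.map _ ≫ Spec.map _ = Spec.map _
    rw [← Spec.map_comp]
    exact congrArg (Spec.map ∘ CommRingCat.ofHom) f.comp_algebraMap)

variable (k) in
def coordinate : Γ((specOver k k[X]).left, ⊤) :=
  (Scheme.ΓSpecIso (CommRingCat.of k[X])).inv Polynomial.X

instance : IsAffine (Over.mk (𝟙 (Spec (CommRingCat.of k)))).left :=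
  inferInstanceAs (IsAffine (Spec _))

instance : LocallyOfFiniteType (Over.mk (𝟙 (Spec (CommRingCat.of k)))).hom :=
  inferInstanceAs (LocallyOfFiniteType (𝟙 _))

instance : Subsingleton (pts k R (Over.mk (𝟙 (Spec (CommRingCat.of k))))) :=
  ⟨Over.mkIdTerminal.hom_ext⟩

instance [IsAffine X.left] [IsAffine Y.left] [IsAffine Z.left] (φ : X ⟶ Z) (ψ : Y ⟶ Z) :
    IsAffine (fiberProdOver φ ψ).left :=
  inferInstanceAs (IsAffine (pullback φ.left ψ.left))

instance [LocallyOfFiniteType X.hom] [LocallyOfFiniteType Y.hom] (φ : X ⟶ Z) (ψ : Y ⟶ Z) :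
    LocallyOfFiniteType (fiberProdOver φ ψ).hom :=
  have : LocallyOfFiniteType (ψ.left ≫ Z.hom) := by rw [Over.w ψ]; infer_instance
  have := locallyOfFiniteType_of_comp ψ.left Z.hom
  inferInstanceAs (LocallyOfFiniteType (pullback.fst φ.left ψ.left ≫ X.hom))

def fiberDiag (φ : X ⟶ Z) : X ⟶ fiberProdOver φ φ :=
  Over.homMk (pullback.diagonal φ.left) (by simp [fiberProdOver])

lemma fiberDiag_fiberFst (φ : X ⟶ Z) : fiberDiag φ ≫ fiberFst φ φ = 𝟙 X :=
  Over.OverMorphism.ext (pullback.diagonal_fst φ.left)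

lemma fiberDiag_fiberSnd (φ : X ⟶ Z) : fiberDiag φ ≫ fiberSnd φ φ = 𝟙 X :=
  Over.OverMorphism.ext (pullback.diagonal_snd φ.left)

instance [IsSeparated X.hom] (φ : X ⟶ Z) : IsClosedImmersion (fiberDiag φ).left :=
  have : IsSeparated (φ.left ≫ Z.hom) := by rw [Over.w φ]; infer_instance
  have := IsSeparated.of_comp φ.left Z.hom
  inferInstanceAs (IsClosedImmersion (pullback.diagonal φ.left))

variable [TopologicalSpace R]

lemma evRingHom_apply (g : pts k R X) (a : Γ(X.left, ⊤)) : evRingHom g a = ev k R X g a :=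
  rfl

lemma ev_ptsMap (φ : X ⟶ Y) (g : pts k R X) (a : Γ(Y.left, ⊤)) :
    ev k R Y (ptsMap R φ g) a = ev k R X g (Scheme.Hom.appTop φ.left a) :=
  rfl

lemma continuous_ev (a : Γ(X.left, ⊤)) : Continuous fun g : pts k R X => ev k R X g a :=
  (continuous_apply a).comp (continuous_induced_dom (f := fun g b => ev k R X g b))

lemma ev_ptOfAlgHom (f : A →ₐ[k] R) (a : Γ((specOver k A).left, ⊤)) :
    ev k R (specOver k A) (ptOfAlgHom f) a = f ((Scheme.ΓSpecIso (CommRingCat.of A)).hom a) :=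
  congrArg (fun h => h a) (Scheme.ΓSpecIso_naturality (CommRingCat.ofHom f.toRingHom))

lemma continuous_ptOfAlgHom :
    Continuous (ptOfAlgHom : (A →ₐ[k] R) → pts k R (specOver k A)) := by
  refine continuous_induced_rng.2 (continuous_pi fun a => ?_)
  change Continuous fun f : A →ₐ[k] R => ev k R _ (ptOfAlgHom f) a
  simp only [ev_ptOfAlgHom]
  exact (continuous_apply _).comp continuous_induced_dom

lemma exists_continuous_section_ev_coordinate
    (hF2 : IsHomeomorph fun f : k[X] →ₐ[k] R => f Polynomial.X) :
    ∃ pt : R → pts k R (specOver k k[X]),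
      Continuous pt ∧ ∀ r, ev k R (specOver k k[X]) (pt r) (coordinate k) = r := by
  refine ⟨fun r => ptOfAlgHom (hF2.homeomorph.symm r),
    continuous_ptOfAlgHom.comp hF2.homeomorph.symm.continuous,
    fun r => (ev_ptOfAlgHom _ _).trans ?_⟩
  rw [coordinate, Iso.inv_hom_id_apply]
  exact hF2.homeomorph.apply_symm_apply r

section PointBase

variable [Subsingleton (pts k R Z)] (φ : X ⟶ Z) (ψ : Y ⟶ Z)

variable (R) in
def fiberProdPtsHomeomorph (h : IsHomeomorph (fiberCompare R φ ψ)) :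
    pts k R (fiberProdOver φ ψ) ≃ₜ pts k R X × pts k R Y :=
  h.homeomorph.trans
    { toEquiv := Equiv.subtypeUnivEquiv fun _ => Subsingleton.elim (α := pts k R Z) _ _
      continuous_toFun := continuous_subtype_val
      continuous_invFun := continuous_id.subtype_mk _ }

lemma fiberProdPtsHomeomorph_apply (h : IsHomeomorph (fiberCompare R φ ψ))
    (g : pts k R (fiberProdOver φ ψ)) :
    fiberProdPtsHomeomorph R φ ψ h g = (ptsMap R (fiberFst φ ψ) g, ptsMap R (fiberSnd φ ψ) g) :=
  rfl

lemma ptsMap_fiberFst_fiberProdPtsHomeomorph_symm (h : IsHomeomorph (fiberCompare R φ ψ))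
    (p : pts k R X × pts k R Y) :
    ptsMap R (fiberFst φ ψ) ((fiberProdPtsHomeomorph R φ ψ h).symm p) = p.1 :=
  congrArg Prod.fst ((fiberProdPtsHomeomorph R φ ψ h).apply_symm_apply p)

lemma ptsMap_fiberSnd_fiberProdPtsHomeomorph_symm (h : IsHomeomorph (fiberCompare R φ ψ))
    (p : pts k R X × pts k R Y) :
    ptsMap R (fiberSnd φ ψ) ((fiberProdPtsHomeomorph R φ ψ h).symm p) = p.2 :=
  congrArg Prod.snd ((fiberProdPtsHomeomorph R φ ψ h).apply_symm_apply p)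

lemma t2Space_pts_of_isClosed_range_fiberDiag (h : IsHomeomorph (fiberCompare R φ φ))
    (hΔ : IsClosed (Set.range (ptsMap R (fiberDiag φ)))) : T2Space (pts k R X) := by
  have hdiag : fiberProdPtsHomeomorph R φ φ h '' Set.range (ptsMap R (fiberDiag φ))
      = Set.range Function.diag := by
    rw [← Set.range_comp]
    congr 1
    funext g
    simp only [Function.comp_apply, fiberProdPtsHomeomorph_apply, ptsMap_ptsMap,
      fiberDiag_fiberFst, fiberDiag_fiberSnd, ptsMap_id, Function.diag]
  rw [t2_iff_isClosed_diagonal, ← Set.range_diag, ← hdiag]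
  exact (fiberProdPtsHomeomorph R φ φ h).isClosedMap _ hΔ

end PointBase

lemma isTopologicalRing_of_continuous_pair {W : Over (Spec (CommRingCat.of k))}
    (pair : R × R → pts k R W) (hpair : Continuous pair) (s₁ s₂ : Γ(W.left, ⊤))
    (h₁ : ∀ p, ev k R W (pair p) s₁ = p.1) (h₂ : ∀ p, ev k R W (pair p) s₂ = p.2) :
    IsTopologicalRing R := by
  have hev (s : Γ(W.left, ⊤)) : Continuous fun p => evRingHom (pair p) s :=
    (continuous_ev s).comp hpair
  have : ContinuousAdd R := ⟨(hev (s₁ + s₂)).congr fun p => by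
    rw [map_add, evRingHom_apply, evRingHom_apply, h₁, h₂]⟩
  have : ContinuousMul R := ⟨(hev (s₁ * s₂)).congr fun p => by
    rw [map_mul, evRingHom_apply, evRingHom_apply, h₁, h₂]⟩
  exact IsTopologicalSemiring.toIsTopologicalRing {}

end SchemePoints

open SchemePoints Topology

/-- if a `k`-algebra `R` with a topology satisfies, for all affine `k`-schemes
of finite type and with respect to the affine topologies, (F1) the canonical bijection
`(X ×_Z Y)(R) → X(R) ×_{Z(R)} Y(R)` is a homeomorphism, (F2) the canonical bijection
`𝔸¹_k(R) → R` is a homeomorphism, and (F3) every closed immersion `Y → X` induces a closed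
topological embedding `Y(R) → X(R)`, then `R` is a topological ring and its topology is
Hausdorff. -/
theorem statement_10 (k R : Type u) [CommRing k] [CommRing R] [Algebra k R]
    [TopologicalSpace R]
    (hF1 : ∀ (X Y Z : Over (Spec (CommRingCat.of k))),
      IsAffine X.left → IsAffine Y.left → IsAffine Z.left →
      LocallyOfFiniteType X.hom → LocallyOfFiniteType Y.hom → LocallyOfFiniteType Z.hom →
      ∀ (φ : X ⟶ Z) (ψ : Y ⟶ Z),
        @IsHomeomorph (pts k R (fiberProdOver φ ψ))
          {p : pts k R X × pts k R Y // p.1 ≫ φ = p.2 ≫ ψ}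
          (affineTop k R (fiberProdOver φ ψ))
          (fiberPtsTop (affineTop k R X) (affineTop k R Y) (fun p => p.1 ≫ φ = p.2 ≫ ψ))
          (fiberCompare R φ ψ))
    (hF2 : @IsHomeomorph (Polynomial k →ₐ[k] R) R (affineTopology k (Polynomial k) R) _
      (fun f => f Polynomial.X))
    (hF3 : ∀ (X Y : Over (Spec (CommRingCat.of k))),
      IsAffine X.left → IsAffine Y.left →
      LocallyOfFiniteType X.hom → LocallyOfFiniteType Y.hom →
      ∀ φ : Y ⟶ X, IsClosedImmersion φ.left →
        @IsClosedEmbedding (pts k R Y) (pts k R X) (affineTop k R Y) (affineTop k R X)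
          (fun g => g ≫ φ)) :
    IsTopologicalRing R ∧ T2Space R := by
  let t : specOver k k[X] ⟶ Over.mk (𝟙 _) := Over.homMk (specOver k k[X]).hom
  have hF1t : IsHomeomorph (fiberCompare R t t) :=
    hF1 _ _ _ inferInstance inferInstance inferInstance inferInstance inferInstance inferInstance t t
  obtain ⟨pt, hpt_cont, hpt⟩ := exists_continuous_section_ev_coordinate hF2
  refine ⟨isTopologicalRing_of_continuous_pair
    (fun p => (fiberProdPtsHomeomorph R t t hF1t).symm (pt p.1, pt p.2)) (by fun_prop)
    ((fiberFst t t).left.appTop (coordinate k)) ((fiberSnd t t).left.appTop (coordinate k))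
    (fun p => ?_) (fun p => ?_), ?_⟩
  · rw [← ev_ptsMap, ptsMap_fiberFst_fiberProdPtsHomeomorph_symm, hpt]
  · rw [← ev_ptsMap, ptsMap_fiberSnd_fiberProdPtsHomeomorph_symm, hpt]
  · have hΔ := hF3 _ _ inferInstance inferInstance inferInstance inferInstance (fiberDiag t)
      inferInstance
    have := t2Space_pts_of_isClosed_range_fiberDiag t hF1t hΔ.isClosed_range
    exact T2Space.of_injective_continuous (fun r s hrs => by rw [← hpt r, ← hpt s, hrs]) hpt_cont
end
end

section
/- Let k be a commutative ring and R a commutative k-algebra. Then R is a local ring if and only if for every k-scheme X and every open covering {U_i}_{i∈I} of X by open subschemes, every morphism Spec R → X over Spec k factors through the open immersion U_i → X for some i ∈ I (equivalently, X(R) = ⋃_{i∈I} U_i(R)). -/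
open AlgebraicGeometry CategoryTheory TopologicalSpace

universe u

/-!
If `R` is local, every point of `Spec R` specializes to the closed point, so the only open
subset containing the closed point is all of `Spec R`; hence a morphism `Spec R → X` lands in
whichever `U_i` contains the image of the closed point. Conversely, applying the factorization
property to the identity of `Spec R` shows that every open cover of `Spec R` has a member equal
to `Spec R`. Covering by the basic opens `D(a)`, `D(1 - a)` then shows that `a` or `1 - a` is a
unit, and the empty cover shows that `R` is nontrivial.
-/

namespace IsLocalRing

variable {R : Type u} [CommRing R]

theorem of_forall_exists_isUnit_of_span_eq_top
    (h : ∀ s : Set R, Ideal.span s = ⊤ → ∃ a ∈ s, IsUnit a) : IsLocalRing R := by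
  have : Nontrivial R := by
    rw [← not_subsingleton_iff_nontrivial]
    intro
    obtain ⟨a, ha, -⟩ := h ∅ (Subsingleton.elim _ _)
    exact ha
  refine of_isUnit_or_isUnit_one_sub_self fun a => ?_
  have hspan : Ideal.span {a, 1 - a} = ⊤ := by
    rw [Ideal.eq_top_iff_one, ← add_sub_cancel a 1]
    exact Ideal.add_mem _ (Ideal.subset_span (by simp)) (Ideal.subset_span (by simp))
  obtain ⟨b, hb, hunit⟩ := h _ hspan
  rcases hb with rfl | rfl
  exacts [.inl hunit, .inr hunit]

theorem _root_.PrimeSpectrum.isUnit_of_basicOpen_eq_top {a : R}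
    (h : PrimeSpectrum.basicOpen a = ⊤) : IsUnit a := by
  have := PrimeSpectrum.iSup_basicOpen_eq_top_iff (f := fun _ : Unit => a)
  simpa [h, Ideal.span_singleton_eq_top] using this

theorem of_forall_iSup_eq_top
    (h : ∀ (ι : Type u) (U : ι → Opens (PrimeSpectrum R)),
      ⨆ i, U i = ⊤ → ∃ i, U i = ⊤) :
    IsLocalRing R := by
  refine of_forall_exists_isUnit_of_span_eq_top fun s hs => ?_
  obtain ⟨⟨a, ha⟩, htop⟩ := h s (fun a => PrimeSpectrum.basicOpen a.1)
    (PrimeSpectrum.iSup_basicOpen_eq_top_iff.mpr (by rwa [Subtype.range_coe]))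
  exact ⟨a, ha, PrimeSpectrum.isUnit_of_basicOpen_eq_top htop⟩

end IsLocalRing

namespace AlgebraicGeometry

theorem Scheme.Opens.eq_top_of_comp_ι_eq_id {X : Scheme} {U : X.Opens} (f : X ⟶ U)
    (hf : f ≫ U.ι = 𝟙 X) : U = ⊤ := by
  rw [eq_top_iff]
  intro x _
  have hx : U.ι.base (f.base x) = x := by
    rw [← Scheme.Hom.comp_apply, hf]
    rfl
  rw [← hx]
  exact (f x).2

theorem exists_lift_opens_of_isLocalRing {R : Type u} [CommRing R] [IsLocalRing R]
    {X : Scheme.{u}} {ι : Type*} (U : ι → X.Opens) (hU : ⨆ i, U i = ⊤)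
    (g : Spec (.of R) ⟶ X) : ∃ (i : ι) (f : Spec (.of R) ⟶ U i), f ≫ (U i).ι = g := by
  have hmem : g.base (IsLocalRing.closedPoint R) ∈ ⨆ i, U i := hU ▸ trivial
  obtain ⟨i, hi⟩ := Opens.mem_iSup.mp hmem
  have hpre : g ⁻¹ᵁ U i = ⊤ := (IsLocalRing.closedPoint_mem_iff _).mp hi
  refine ⟨i, IsOpenImmersion.lift (U i).ι g ?_, IsOpenImmersion.lift_fac _ _ _⟩
  rw [Scheme.Opens.range_ι]
  rintro _ ⟨x, rfl⟩
  exact (hpre.ge trivial : x ∈ g ⁻¹ᵁ U i)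

end AlgebraicGeometry

/-- a commutative `k`-algebra `R` is a local ring if and only if for every
`k`-scheme `X` and every open covering `{U_i}` of `X` by open subschemes, every morphism
`Spec R → X` over `Spec k` factors through the open immersion `U_i → X` for some `i`
(i.e. `X(R) = ⋃ᵢ U_i(R)`). -/
theorem statement_11 (k R : Type u) [CommRing k] [CommRing R] [Algebra k R] :
    IsLocalRing R ↔
      ∀ (X : Scheme.{u}) (sX : X ⟶ Spec (CommRingCat.of k))
        (ι : Type u) (U : ι → X.Opens), (⨆ i, U i) = ⊤ →
        ∀ g : Spec (CommRingCat.of R) ⟶ X,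
          g ≫ sX = Spec.map (CommRingCat.ofHom (algebraMap k R)) →
          ∃ (i : ι) (h : Spec (CommRingCat.of R) ⟶ (U i : Scheme.{u})),
            h ≫ (U i).ι = g := by
  refine ⟨fun _ X _ ι U hU g _ => exists_lift_opens_of_isLocalRing U hU g, fun h => ?_⟩
  refine IsLocalRing.of_forall_iSup_eq_top fun ι U hU => ?_
  obtain ⟨i, f, hf⟩ := h (Spec (.of R)) (Spec.map (CommRingCat.ofHom (algebraMap k R))) ι U hU
    (𝟙 _) (Category.id_comp _)
  exact ⟨i, Scheme.Opens.eq_top_of_comp_ι_eq_id f hf⟩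
end

section
/- Let k be a commutative ring and R a commutative k-algebra that is with maximally disconnected spectrum. Let X be a k-scheme with a finite affine open covering {U_i}_{i∈I}, let U = ∐_{i∈I} U_i be the disjoint union and Ψ : U → X the induced morphism. Then the induced map Ψ_R : U(R) → X(R) is surjective; that is, every morphism Spec R → X over Spec k factors through Ψ. -/
/-
Pull the cover back along `g` to a finite open cover of `Spec R`. Every point of `Spec R`
specializes to a closed point, and in a maximally disconnected spectrum a closed point `x` has
clopen neighbourhoods inside any open neighbourhood: the complement `C` of the open set is compact
and each of its points specializes to a closed point of `C`, which is separated from `x` by a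
clopen set. Compactness then refines the cover to finitely many clopen sets, which can be made
pairwise disjoint. A scheme covered by pairwise disjoint open subschemes is their coproduct, so
`g` is glued from its restrictions to the pieces, each of which lands in some `U i`.
-/

open AlgebraicGeometry CategoryTheory CategoryTheory.Limits

universe u

/-- A commutative ring `R` is *with maximally disconnected spectrum* if any two distinct
closed points `x` and `y` of `Spec R` have respective open neighbourhoods `U₁` and `U₂`
such that `Spec R` is the disjoint union of `U₁` and `U₂`. -/
def WithMaximallyDisconnectedSpectrum (R : Type*) [CommRing R] : Prop :=
  ∀ x y : PrimeSpectrum R, IsClosed ({x} : Set (PrimeSpectrum R)) →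
    IsClosed ({y} : Set (PrimeSpectrum R)) → x ≠ y →
    ∃ U₁ U₂ : Set (PrimeSpectrum R), IsOpen U₁ ∧ IsOpen U₂ ∧ x ∈ U₁ ∧ y ∈ U₂ ∧
      U₁ ∪ U₂ = Set.univ ∧ U₁ ∩ U₂ = ∅

open TopologicalSpace
open scoped Function

section Topology
variable {X : Type*} [TopologicalSpace X] [CompactSpace X]

theorem exists_specializes_isClosed_singleton [T0Space X] (z : X) :
    ∃ x, z ⤳ x ∧ IsClosed ({x} : Set X) := by
  obtain ⟨x, hzx, hx⟩ := isClosed_closure.exists_closed_singleton (closure_nonempty_iff.2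
    (Set.singleton_nonempty z))
  exact ⟨x, specializes_iff_mem_closure.2 hzx, hx⟩

theorem exists_clopens_cover_subset {ι : Type*} {V : ι → Set X}
    (h : ∀ x, ∃ i, ∃ W, IsClopen W ∧ x ∈ W ∧ W ⊆ V i) :
    ∃ A : ι → Clopens X, (∀ i, (A i : Set X) ⊆ V i) ∧ ⋃ i, (A i : Set X) = Set.univ := by
  classical
  choose idx W hW hxW hWV using h
  obtain ⟨t, ht⟩ := isCompact_univ.elim_finite_subcover W (fun x => (hW x).isOpen)
    fun x _ => Set.mem_iUnion.2 ⟨x, hxW x⟩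
  refine ⟨fun i => ⟨⋃ x ∈ t.filter (idx · = i), W x, isClopen_biUnion_finset fun x _ => hW x⟩,
    fun i => ?_, ?_⟩
  · simp only [Clopens.coe_mk, Set.iUnion_subset_iff, Finset.mem_filter]
    rintro x ⟨-, rfl⟩
    exact hWV x
  · refine Set.eq_univ_of_univ_subset fun y hy => ?_
    obtain ⟨x, hx, hyx⟩ := Set.mem_iUnion₂.1 (ht hy)
    exact Set.mem_iUnion.2 ⟨idx x, Set.mem_biUnion (Finset.mem_filter.2 ⟨hx, rfl⟩) hyx⟩

theorem exists_pairwise_disjoint_clopens_cover_subset {ι : Type*} [Fintype ι] {V : ι → Set X}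
    (h : ∀ x, ∃ i, ∃ W, IsClopen W ∧ x ∈ W ∧ W ⊆ V i) :
    ∃ B : ι → Clopens X, (∀ i, (B i : Set X) ⊆ V i) ∧ ⋃ i, (B i : Set X) = Set.univ ∧
      Pairwise (Disjoint on B) := by
  obtain ⟨A, hAV, hAcov⟩ := exists_clopens_cover_subset h
  obtain ⟨B, hBA, hBsup, hBdisj⟩ := Fintype.exists_disjointed_le A
  refine ⟨B, fun i => (SetLike.coe_subset_coe.2 (hBA i)).trans (hAV i), ?_, hBdisj⟩
  have := congrArg SetLike.coe hBsup
  simp only [Clopens.coe_finset_sup, Finset.mem_univ, Set.iUnion_true] at this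
  rw [this, hAcov]

end Topology

namespace WithMaximallyDisconnectedSpectrum
variable {R : Type*} [CommRing R]

theorem exists_isClopen_mem_notMem (hR : WithMaximallyDisconnectedSpectrum R)
    {x y : PrimeSpectrum R} (hx : IsClosed ({x} : Set _)) (hy : IsClosed ({y} : Set _))
    (hxy : x ≠ y) :
    ∃ W : Set (PrimeSpectrum R), IsClopen W ∧ y ∈ W ∧ x ∉ W := by
  obtain ⟨U₁, U₂, hU₁, hU₂, hxU₁, hyU₂, hunion, hinter⟩ := hR x y hx hy hxy
  have hcompl : U₂ = U₁ᶜ := (IsCompl.of_eq hinter hunion).symm.eq_compl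
  exact ⟨U₂, ⟨hcompl ▸ hU₁.isClosed_compl, hU₂⟩, hyU₂, hcompl ▸ not_not_intro hxU₁⟩

theorem exists_isClopen_mem_subset (hR : WithMaximallyDisconnectedSpectrum R)
    {x : PrimeSpectrum R} (hx : IsClosed ({x} : Set _)) {V : Set (PrimeSpectrum R)}
    (hV : IsOpen V) (hxV : x ∈ V) :
    ∃ W : Set (PrimeSpectrum R), IsClopen W ∧ x ∈ W ∧ W ⊆ V := by
  have hsep (z : ↥Vᶜ) : ∃ C : Set (PrimeSpectrum R), IsClopen C ∧ ↑z ∈ C ∧ x ∉ C := by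
    obtain ⟨y, hzy, hy⟩ := exists_specializes_isClosed_singleton z.1
    have hyV : y ∉ V := hzy.mem_closed hV.isClosed_compl z.2
    obtain ⟨C, hC, hyC, hxC⟩ := hR.exists_isClopen_mem_notMem hx hy (ne_of_mem_of_not_mem hxV hyV)
    exact ⟨C, hC, hzy.mem_open hC.isOpen hyC, hxC⟩
  choose C hC hzC hxC using hsep
  obtain ⟨t, ht⟩ := hV.isClosed_compl.isCompact.elim_finite_subcover C (fun z => (hC z).isOpen)
    fun z hz => Set.mem_iUnion.2 ⟨⟨z, hz⟩, hzC _⟩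
  refine ⟨(⋃ z ∈ t, C z)ᶜ, (isClopen_biUnion_finset fun z _ => hC z).compl, ?_,
    Set.compl_subset_comm.1 ht⟩
  simpa using fun z _ => hxC z

theorem exists_pairwise_disjoint_opens_le (hR : WithMaximallyDisconnectedSpectrum R)
    {ι : Type*} [Fintype ι] (V : ι → Opens (PrimeSpectrum R)) (hV : ⨆ i, V i = ⊤) :
    ∃ Z : ι → Opens (PrimeSpectrum R), (∀ i, Z i ≤ V i) ∧ ⨆ i, Z i = ⊤ ∧
      Pairwise (Disjoint on Z) := by
  have hnhds (z : PrimeSpectrum R) : ∃ i, ∃ W, IsClopen W ∧ z ∈ W ∧ W ⊆ V i := by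
    obtain ⟨x, hzx, hx⟩ := exists_specializes_isClosed_singleton z
    obtain ⟨i, hi⟩ := Opens.mem_iSup.1 (hV ▸ Opens.mem_top x : x ∈ ⨆ i, V i)
    obtain ⟨W, hW, hxW, hWV⟩ := hR.exists_isClopen_mem_subset hx (V i).isOpen hi
    exact ⟨i, W, hW, hzx.mem_open hW.isOpen hxW, hWV⟩
  obtain ⟨B, hBV, hBcov, hBdisj⟩ := exists_pairwise_disjoint_clopens_cover_subset hnhds
  refine ⟨fun i => (B i).toOpens, hBV, ?_, fun i j hij => ?_⟩
  · simpa [← SetLike.coe_set_eq] using hBcov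
  · simpa [← Opens.coe_disjoint, Clopens.coe_disjoint] using hBdisj hij

end WithMaximallyDisconnectedSpectrum

theorem AlgebraicGeometry.Scheme.exists_comp_sigmaDesc_eq {ι : Type*} [Small.{u} ι]
    {X Y : Scheme.{u}} (g : Y ⟶ X) (U : ι → X.Opens) (Z : ι → Y.Opens)
    (hcov : ⨆ i, Z i = ⊤) (hdisj : Pairwise (Disjoint on Z)) (hle : ∀ i, Z i ≤ g ⁻¹ᵁ U i) :
    ∃ h : Y ⟶ ∐ fun i => (U i : Scheme.{u}), h ≫ Sigma.desc (fun i => (U i).ι) = g := by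
  obtain ⟨hY⟩ := nonempty_isColimit_cofanMk_of (fun i => (Z i).ι)
    (by simpa only [Scheme.Opens.opensRange_ι] using hcov)
    (by simpa only [Scheme.Opens.opensRange_ι] using hdisj)
  let lift (i : ι) : (Z i : Scheme.{u}) ⟶ ∐ fun i => (U i : Scheme.{u}) :=
    g.resLE (U i) (Z i) (hle i) ≫ Sigma.ι (fun i => (U i : Scheme.{u})) i
  refine ⟨Cofan.IsColimit.desc hY lift, Cofan.IsColimit.hom_ext hY _ _ fun i => ?_⟩
  have hfac : (Z i).ι ≫ Cofan.IsColimit.desc hY lift = lift i := by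
    simpa only [cofan_mk_inj] using Cofan.IsColimit.fac hY lift i
  simp [reassoc_of% hfac, lift]

theorem statement_17_general (R : Type u) [CommRing R]
    (hR : WithMaximallyDisconnectedSpectrum R)
    (X : Scheme.{u})
    (ι : Type u) [Fintype ι] (U : ι → X.Opens)
    (hcov : (⨆ i, U i) = ⊤)
    (g : Spec (CommRingCat.of R) ⟶ X) :
    ∃ h : Spec (CommRingCat.of R) ⟶ ∐ (fun i => ((U i : Scheme.{u}))),
      h ≫ Sigma.desc (fun i => (U i).ι) = g := by
  have hpre : ⨆ i, g ⁻¹ᵁ U i = ⊤ := by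
    rw [← Scheme.Hom.preimage_iSup, hcov, Scheme.Hom.preimage_top]
  obtain ⟨Z, hZU, hZcov, hZdisj⟩ := hR.exists_pairwise_disjoint_opens_le _ hpre
  exact Scheme.exists_comp_sigmaDesc_eq g U Z hZcov hZdisj hZU

/-- let `R` be a commutative `k`-algebra with maximally disconnected spectrum,
`X` a `k`-scheme with a finite affine open covering `{U_i}`, `U = ∐ᵢ U_i` the disjoint union
and `Ψ : U → X` the induced morphism. Then every morphism `Spec R → X` over `Spec k` factors
through `Ψ`, i.e. `Ψ_R : U(R) → X(R)` is surjective. -/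
theorem statement_17 (k R : Type u) [CommRing k] [CommRing R] [Algebra k R]
    (hR : WithMaximallyDisconnectedSpectrum R)
    (X : Scheme.{u}) (sX : X ⟶ Spec (CommRingCat.of k))
    (ι : Type u) [Fintype ι] (U : ι → X.Opens)
    (hU : ∀ i, IsAffineOpen (U i)) (hcov : (⨆ i, U i) = ⊤)
    (g : Spec (CommRingCat.of R) ⟶ X)
    (hg : g ≫ sX = Spec.map (CommRingCat.ofHom (algebraMap k R))) :
    ∃ h : Spec (CommRingCat.of R) ⟶ ∐ (fun i => ((U i : Scheme.{u}))),
      h ≫ Sigma.desc (fun i => (U i).ι) = g :=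
  statement_17_general R hR X ι U hcov g
end

section
/- Let k be a commutative ring and R a commutative k-algebra. Suppose that for every k-scheme X with a finite affine open covering {U_i}_{i∈I}, every morphism Spec R → X over Spec k factors through the induced morphism Ψ : ∐_{i∈I} U_i → X from the disjoint union. Then for every n ≥ 1 and all elements h_1, …, h_n ∈ R with 1 = h_1 + ⋯ + h_n, there exist idempotent elements e_1, …, e_n ∈ R with e_i contained in the principal ideal (h_i) for each i and 1 = e_1 + ⋯ + e_n; in particular, R is with maximally disconnected spectrum. -/
open AlgebraicGeometry CategoryTheory CategoryTheory.Limits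

universe u

/-!
Take `X = Spec R` with the affine cover by the basic opens `D(hᵢ)` and `g` the identity.
A lift of `g` to `∐ᵢ D(hᵢ)` is a section of the covering map, so pulling back the clopen
components of the coproduct partitions `Spec R` into clopen sets `Cᵢ ⊆ D(hᵢ)`. Clopen subsets
of `Spec R` are the `D(e)` with `e` idempotent; a clopen partition gives a complete family of
orthogonal idempotents, and `D(eᵢ) ⊆ D(hᵢ)` forces `eᵢ ∈ (hᵢ)`, as `eᵢ` is idempotent and lies in
the radical of `(hᵢ)`. For distinct maximal ideals `𝔪`, `𝔫` pick `a ∈ 𝔫` with `1 - a ∈ 𝔪`; the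
splitting `e, 1 - e` of `1 = a + (1 - a)` gives the complementary clopen sets `D(e) ∋ 𝔪` and
`D(1 - e) ∋ 𝔫`.
-/

lemma IsIdempotentElem.mem_span_singleton_of_basicOpen_le {R : Type*} [CommRing R] {e a : R}
    (he : IsIdempotentElem e) (hle : PrimeSpectrum.basicOpen e ≤ PrimeSpectrum.basicOpen a) :
    e ∈ Ideal.span {a} := by
  obtain ⟨m, hm⟩ := (PrimeSpectrum.basicOpen_le_basicOpen_iff e a).mp hle
  rw [← he.pow_succ_eq m, pow_succ]
  exact Ideal.mul_mem_right e _ hm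

namespace PrimeSpectrum

variable {R : Type*} [CommRing R]

lemma exists_completeOrthogonalIdempotents_basicOpen_eq_fiber {ι : Type*} [Fintype ι]
    {c : PrimeSpectrum R → ι} (hc : IsLocallyConstant c) :
    ∃ e : ι → R, CompleteOrthogonalIdempotents e ∧
      ∀ i, (basicOpen (e i) : Set (PrimeSpectrum R)) = c ⁻¹' {i} := by
  choose e he hfiber using fun i ↦ exists_idempotent_basicOpen_eq_of_isClopen (hc.isClopen_fiber i)
  have notMem_iff {p : PrimeSpectrum R} {i : ι} : e i ∉ p.asIdeal ↔ c p = i := by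
    rw [← mem_basicOpen, ← SetLike.mem_coe, ← hfiber i]; rfl
  have ortho : OrthogonalIdempotents e := by
    refine ⟨he, fun i j hij ↦ basicOpen_injOn_isIdempotentElem ((he i).mul (he j)) .zero ?_⟩
    ext p
    simp only [basicOpen_zero, TopologicalSpace.Opens.coe_bot, Set.mem_empty_iff_false,
      iff_false, SetLike.mem_coe, mem_basicOpen, p.isPrime.mul_mem_iff_mem_or_mem, not_or,
      notMem_iff, not_and]
    rintro rfl
    exact hij
  refine ⟨e, ⟨ortho, basicOpen_injOn_isIdempotentElem ortho.isIdempotentElem_sum .one ?_⟩,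
    fun i ↦ (hfiber i).symm⟩
  classical
  ext p
  rw [basicOpen_one, TopologicalSpace.Opens.coe_top, SetLike.mem_coe, mem_basicOpen,
    ← Finset.add_sum_erase _ _ (Finset.mem_univ (c p))]
  simp only [Set.mem_univ, iff_true]
  have hrest : ∀ j ∈ Finset.univ.erase (c p), e j ∈ p.asIdeal := fun j hj ↦
    not_not.mp fun h ↦ Finset.ne_of_mem_erase hj (notMem_iff.mp h).symm
  rw [Ideal.add_mem_iff_left _ (Ideal.sum_mem _ hrest)]
  exact notMem_iff.mpr rfl

end PrimeSpectrum

namespace AlgebraicGeometry.Scheme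

lemma exists_isLocallyConstant_mem_range_sigmaι {ι : Type u} {f : ι → Scheme.{u}}
    {Y : Scheme.{u}} (h : Y ⟶ ∐ f) :
    ∃ c : Y → ι, IsLocallyConstant c ∧ ∀ y, h y ∈ Set.range (Sigma.ι f (c y)) := by
  refine ⟨fun y ↦ ((sigmaMk f).symm (h y)).1, ?_, fun y ↦ ?_⟩
  · exact IsLocallyConstant.comp_continuous (g := Sigma.fst) isOpen_sigma_fst_preimage
      ((sigmaMk f).symm.continuous.comp h.continuous)
  · exact ⟨((sigmaMk f).symm (h y)).2, by rw [← sigmaMk_mk, Sigma.eta, Homeomorph.apply_symm_apply]⟩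

lemma exists_isLocallyConstant_sigmaDesc_ι_mem {ι : Type u} {X Y : Scheme.{u}}
    {U : ι → X.Opens} (h : Y ⟶ ∐ fun i ↦ (U i : Scheme.{u})) :
    ∃ c : Y → ι, IsLocallyConstant c ∧ ∀ y, (h ≫ Sigma.desc fun i ↦ (U i).ι) y ∈ U (c y) := by
  obtain ⟨c, hc, hrange⟩ := exists_isLocallyConstant_mem_range_sigmaι h
  refine ⟨c, hc, fun y ↦ ?_⟩
  obtain ⟨z, hz⟩ := hrange y
  rw [Scheme.Hom.comp_apply, ← hz, ← Scheme.Hom.comp_apply, Sigma.ι_desc]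
  exact z.2

end AlgebraicGeometry.Scheme

open PrimeSpectrum in
lemma exists_completeOrthogonalIdempotents_basicOpen_le_of_section {R : Type u} [CommRing R]
    {ι : Type u} [Fintype ι] {U : ι → (Spec (CommRingCat.of R)).Opens}
    (s : Spec (CommRingCat.of R) ⟶ ∐ fun i ↦ (U i : Scheme.{u}))
    (hs : s ≫ Sigma.desc (fun i ↦ (U i).ι) = 𝟙 _) :
    ∃ e : ι → R, CompleteOrthogonalIdempotents e ∧ ∀ i, basicOpen (e i) ≤ U i := by
  obtain ⟨c, hc, hmem⟩ := Scheme.exists_isLocallyConstant_sigmaDesc_ι_mem s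
  rw [hs] at hmem
  obtain ⟨e, he, hfiber⟩ := exists_completeOrthogonalIdempotents_basicOpen_eq_fiber hc
  refine ⟨e, he, fun i p hp ↦ ?_⟩
  have hcp : c p = i := by rwa [← SetLike.mem_coe, hfiber] at hp
  exact hcp ▸ hmem p

open PrimeSpectrum in
lemma withMaximallyDisconnectedSpectrum_of_exists_isIdempotentElem {R : Type*} [CommRing R]
    (h : ∀ a : R, ∃ e, IsIdempotentElem e ∧ e ∈ Ideal.span {a} ∧ 1 - e ∈ Ideal.span {1 - a}) :
    WithMaximallyDisconnectedSpectrum R := by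
  intro x y hx hy hxy
  have hcoprime : y.asIdeal ⊔ x.asIdeal = ⊤ :=
    ((isClosed_singleton_iff_isMaximal y).mp hy).coprime_of_ne
      ((isClosed_singleton_iff_isMaximal x).mp hx) fun h ↦ hxy (PrimeSpectrum.ext h).symm
  obtain ⟨a, ha, b, hb, hab⟩ := Submodule.mem_sup.mp (hcoprime ▸ Submodule.mem_top : (1 : R) ∈ _)
  obtain ⟨e, he, hea, heb⟩ := h a
  rw [show 1 - a = b by rw [← hab, add_sub_cancel_left]] at heb
  have hey : e ∈ y.asIdeal := Ideal.span_singleton_le_iff_mem _ |>.mpr ha hea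
  have h1ex : 1 - e ∈ x.asIdeal := Ideal.span_singleton_le_iff_mem _ |>.mpr hb heb
  refine ⟨basicOpen e, (basicOpen e)ᶜ, (basicOpen e).isOpen,
    (isClopen_iff.mpr ⟨e, he, rfl⟩).isClosed.isOpen_compl, fun hex ↦ ?_, not_not.mpr hey,
    Set.union_compl_self _, Set.inter_compl_self _⟩
  exact x.isPrime.ne_top <| (Ideal.eq_top_iff_one _).mpr <| by
    simpa using x.asIdeal.add_mem hex h1ex

/-- let `R` be a commutative `k`-algebra such that for every `k`-scheme `X`
with a finite affine open covering `{U_i}`, every morphism `Spec R → X` over `Spec k` factors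
through the induced morphism `Ψ : ∐ᵢ U_i → X`. Then for every `n ≥ 1` and all
`h₁, …, hₙ ∈ R` with `1 = h₁ + ⋯ + hₙ` there exist idempotent elements `eᵢ ∈ (hᵢ)` with
`1 = e₁ + ⋯ + eₙ`; in particular, `R` is with maximally disconnected spectrum. -/
theorem statement_18 (k R : Type u) [CommRing k] [CommRing R] [Algebra k R]
    (H : ∀ (X : Scheme.{u}) (sX : X ⟶ Spec (CommRingCat.of k))
      (ι : Type u) (_ : Fintype ι) (U : ι → X.Opens),
      (∀ i, IsAffineOpen (U i)) → (⨆ i, U i) = ⊤ →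
      ∀ g : Spec (CommRingCat.of R) ⟶ X,
        g ≫ sX = Spec.map (CommRingCat.ofHom (algebraMap k R)) →
        ∃ h : Spec (CommRingCat.of R) ⟶ ∐ (fun i => ((U i : Scheme.{u}))),
          h ≫ Sigma.desc (fun i => (U i).ι) = g) :
    (∀ n : ℕ, 1 ≤ n → ∀ hs : Fin n → R, (∑ i, hs i) = 1 →
      ∃ e : Fin n → R, (∀ i, IsIdempotentElem (e i)) ∧
        (∀ i, e i ∈ Ideal.span {hs i}) ∧ (∑ i, e i) = 1) ∧
    WithMaximallyDisconnectedSpectrum R := by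
  have split (n : ℕ) (hs : Fin n → R) (hsum : ∑ i, hs i = 1) :
      ∃ e : Fin n → R, (∀ i, IsIdempotentElem (e i)) ∧
        (∀ i, e i ∈ Ideal.span {hs i}) ∧ (∑ i, e i) = 1 := by
    let U : ULift.{u} (Fin n) → (Spec (CommRingCat.of R)).Opens :=
      fun i ↦ PrimeSpectrum.basicOpen (hs i.down)
    have hcover : (⨆ i, U i) = ⊤ :=
      PrimeSpectrum.iSup_basicOpen_eq_top_iff.mpr <| (Ideal.eq_top_iff_one _).mpr <|
        hsum ▸ Ideal.sum_mem _ fun i _ ↦ Ideal.subset_span ⟨.up i, rfl⟩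
    obtain ⟨s, hs_section⟩ := H _ (Spec.map (CommRingCat.ofHom (algebraMap k R))) _
      inferInstance U (fun i ↦ IsAffineOpen.Spec_basicOpen (R := .of R) (hs i.down)) hcover
      (𝟙 _) (Category.id_comp _)
    obtain ⟨e, he, hle⟩ := exists_completeOrthogonalIdempotents_basicOpen_le_of_section s hs_section
    exact ⟨fun i ↦ e (.up i), fun i ↦ he.idem _,
      fun i ↦ (he.idem _).mem_span_singleton_of_basicOpen_le (hle _),
      (Equiv.ulift.symm.sum_comp e).trans he.complete⟩
  refine ⟨fun n _ ↦ split n, withMaximallyDisconnectedSpectrum_of_exists_isIdempotentElem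
    fun a ↦ ?_⟩
  obtain ⟨e, he, hmem, hsum⟩ := split 2 ![a, 1 - a] (by simp)
  refine ⟨e 0, he 0, hmem 0, ?_⟩
  rw [Fin.sum_univ_two] at hsum
  rw [show 1 - e 0 = e 1 by rw [← hsum, add_sub_cancel_left]]
  exact hmem 1
end
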